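/- arXiv:1310.3787 — 5 statements merged into one kernel-verified Lean document; each statement's English description precedes it below -/
import Mathlib

section
/- Let $\Psi: \mathbb{R}^n \to \mathbb{R}$ be differentiable with $L_\Psi$-Lipschitz gradient and bounded below by $\Psi^*$. Consider the AG iteration: $x_0^{ag} = x_0$, and for $k \ge 1$, $x_k^{md} = (1-\alpha_k)x_{k-1}^{ag} + \alpha_k x_{k-1}$, $x_k = x_{k-1} - \lambda_k\nabla\Psi(x_k^{md})$, $x_k^{ag} = x_k^{md} - \beta_k\nabla\Psi(x_k^{md})$, with $\alpha_1 = 1$, $\alpha_k \in (0,1)$ for $k \ge 2$, $\beta_k, \lambda_k > 0$. If for each $k \le N$ the quantity $C_k := 1 - L_\Psi\lambda_k - \frac{L_\Psi(\lambda_k - \beta_k)^2}{2\alpha_k\Gamma_k\lambda_k}\sum_{\tau=k}^N\Gamma_\tau$ is positive, where $\Gamma_1=1$, $\Gamma_k = (1-\alpha_k)\Gamma_{k-1}$, then $\min_{k=1,\ldots,N}\|\nabla\Psi(x_k^{md})\|^2 \le \frac{\Psi(x_0) - \Psi^*}{\sum_{k=1}^N \lambda_k C_k}$. -/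
/-
Each AG step is a gradient step from `x (k-1)` with the gradient taken at `xmd k`, so the descent
lemma gives `Ψ (x k) ≤ Ψ (x (k-1)) - λₖ (1 - L λₖ) ‖∇Ψ (xmd k)‖² + L/2 ‖x (k-1) - xmd k‖²`.
The error term is `(1 - αₖ) dₖ₋₁` with `dₖ = x k - xag k`, and
`dₖ = (1 - αₖ) dₖ₋₁ - (λₖ - βₖ) ∇Ψ (xmd k)`; convexity of `‖·‖²` turns this recursion into
`‖dₖ‖² ≤ Γₖ ∑_{j ≤ k} (λⱼ - βⱼ)² / (αⱼ Γⱼ) ‖∇Ψ (xmd j)‖²`. Telescoping and exchanging the order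
of summation give `∑ λₖ Cₖ ‖∇Ψ (xmd k)‖² ≤ Ψ (x 0) - Ψ*`, and the minimum is at most the
weighted average.
-/

open Finset

theorem lipschitz_const_nonneg {E F : Type*} [NormedAddCommGroup E] [Nontrivial E]
    [NormedAddCommGroup F] {g : E → F} {L : ℝ} (hL : ∀ x y, ‖g x - g y‖ ≤ L * ‖x - y‖) :
    0 ≤ L := by
  obtain ⟨x, y, hxy⟩ := exists_pair_ne E
  have hpos : 0 < ‖x - y‖ := norm_pos_iff.2 (sub_ne_zero.2 hxy)
  exact nonneg_of_mul_nonneg_left ((norm_nonneg _).trans (hL x y)) hpos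

section Descent

variable {E : Type*} [NormedAddCommGroup E] [InnerProductSpace ℝ E]
  {Ψ : E → ℝ} {g : E → E} {L : ℝ}

theorem inner_sub_le_of_lipschitz (hL : ∀ x y, ‖g x - g y‖ ≤ L * ‖x - y‖) (x y v : E) :
    inner ℝ (g x - g y) v ≤ L * ‖x - y‖ * ‖v‖ :=
  (real_inner_le_norm _ _).trans (mul_le_mul_of_nonneg_right (hL x y) (norm_nonneg v))

theorem hasDerivAt_comp_add_smul [CompleteSpace E] (hg : ∀ x, HasGradientAt Ψ (g x) x)
    (a v : E) (t : ℝ) :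
    HasDerivAt (fun s : ℝ => Ψ (a + s • v)) (inner ℝ (g (a + t • v)) v) t := by
  have hline : HasDerivAt (fun s : ℝ => a + s • v) v t := by
    simpa using ((hasDerivAt_id t).smul_const v).const_add a
  have h := (hg (a + t • v)).hasFDerivAt.comp_hasDerivAt t hline
  simp only [InnerProductSpace.toDual_apply_apply] at h
  exact h

theorem le_add_inner_add_sq_of_lipschitz_gradient [CompleteSpace E]
    (hg : ∀ x, HasGradientAt Ψ (g x) x) (hL : ∀ x y, ‖g x - g y‖ ≤ L * ‖x - y‖) (a b : E) :
    Ψ b ≤ Ψ a + inner ℝ (g a) (b - a) + L / 2 * ‖b - a‖ ^ 2 := by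
  set v := b - a
  have hf (t : ℝ) : HasDerivAt (fun s => Ψ (a + s • v) - s * inner ℝ (g a) v)
      (inner ℝ (g (a + t • v)) v - inner ℝ (g a) v) t := by
    have h := (hasDerivAt_comp_add_smul hg a v t).sub
      ((hasDerivAt_id t).mul_const (inner ℝ (g a) v))
    simp only [one_mul] at h
    exact h
  have hB (t : ℝ) : HasDerivAt (fun s => Ψ a + L / 2 * s ^ 2 * ‖v‖ ^ 2) (L * t * ‖v‖ ^ 2) t := by
    exact ((((hasDerivAt_pow 2 t).const_mul (L / 2)).mul_const (‖v‖ ^ 2)).const_add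
      (Ψ a)).congr_deriv (by simp only [Nat.cast_ofNat, Nat.add_one_sub_one, pow_one]; ring)
  have hbound (t : ℝ) (ht : t ∈ Set.Ico (0 : ℝ) 1) :
      inner ℝ (g (a + t • v)) v - inner ℝ (g a) v ≤ L * t * ‖v‖ ^ 2 := by
    have := inner_sub_le_of_lipschitz hL (a + t • v) a v
    rw [inner_sub_left, add_sub_cancel_left, norm_smul, Real.norm_of_nonneg ht.1] at this
    linarith
  have key := image_le_of_deriv_right_le_deriv_boundary
    (fun t _ => (hf t).continuousAt.continuousWithinAt) (fun t _ => (hf t).hasDerivWithinAt)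
    (by simp) (fun t _ => (hB t).continuousAt.continuousWithinAt)
    (fun t _ => (hB t).hasDerivWithinAt) hbound (Set.right_mem_Icc.2 zero_le_one)
  simp only [one_smul, add_sub_cancel, one_mul, one_pow, v] at key
  linarith

theorem le_sub_mul_norm_sq_of_gradient_step [CompleteSpace E]
    (hg : ∀ x, HasGradientAt Ψ (g x) x) (hL : ∀ x y, ‖g x - g y‖ ≤ L * ‖x - y‖) (hL0 : 0 ≤ L)
    {lam : ℝ} (hlam : 0 ≤ lam) (x y : E) :
    Ψ (x - lam • g y) ≤ Ψ x - lam * (1 - L * lam) * ‖g y‖ ^ 2 + L / 2 * ‖x - y‖ ^ 2 := by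
  have hdesc := le_add_inner_add_sq_of_lipschitz_gradient hg hL x (x - lam • g y)
  have hinner : inner ℝ (g x) (x - lam • g y - x)
      = -lam * ‖g y‖ ^ 2 + lam * inner ℝ (g y - g x) (g y) := by
    rw [sub_sub_cancel_left, inner_neg_right, real_inner_smul_right, inner_sub_left,
      real_inner_self_eq_norm_sq]
    ring
  have hnorm : ‖x - lam • g y - x‖ ^ 2 = lam ^ 2 * ‖g y‖ ^ 2 := by
    rw [sub_sub_cancel_left, norm_neg, norm_smul, mul_pow, Real.norm_eq_abs, sq_abs]
  have hcross := mul_le_mul_of_nonneg_left (inner_sub_le_of_lipschitz hL y x (g y)) hlam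
  have hyoung := mul_nonneg hL0 (sq_nonneg (‖y - x‖ - lam * ‖g y‖))
  rw [hinner, hnorm] at hdesc
  rw [norm_sub_rev x y]
  nlinarith

end Descent

theorem norm_one_sub_smul_sub_smul_sq_le {E : Type*} [NormedAddCommGroup E]
    [InnerProductSpace ℝ E] {a : ℝ} (ha0 : 0 < a) (ha1 : a ≤ 1) (c : ℝ) (u v : E) :
    ‖(1 - a) • u - c • v‖ ^ 2 ≤ (1 - a) * ‖u‖ ^ 2 + c ^ 2 / a * ‖v‖ ^ 2 := by
  have hconv := (convexOn_univ_norm.pow (fun x _ => norm_nonneg x) 2).2 (Set.mem_univ u)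
    (Set.mem_univ (-(c / a) • v)) (sub_nonneg.2 ha1) ha0.le (sub_add_cancel 1 a)
  have hsplit : (1 - a) • u + a • -(c / a) • v = (1 - a) • u - c • v := by
    rw [smul_smul, mul_neg, mul_div_cancel₀ c ha0.ne', neg_smul, ← sub_eq_add_neg]
  simp only [Pi.pow_apply, smul_eq_mul, hsplit, norm_neg, norm_smul, mul_pow,
    Real.norm_eq_abs, sq_abs, div_pow] at hconv
  refine hconv.trans_eq ?_
  field_simp

theorem sum_Icc_le_sub_of_le_sub {M : Type*} [AddCommGroup M] [PartialOrder M]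
    [IsOrderedAddMonoid M] {f u : ℕ → M} (h : ∀ k, f (k + 1) ≤ f k - u (k + 1)) (N : ℕ) :
    ∑ k ∈ Icc 1 N, u k ≤ f 0 - f N := by
  induction N with
  | zero => simp
  | succ N ih =>
    rw [sum_Icc_succ_top (by omega), ← sub_add_sub_cancel (f 0) (f N) (f (N + 1))]
    exact add_le_add ih (le_sub_comm.1 (h N))

theorem sum_Icc_mul_sum_Icc_eq {R : Type*} [CommSemiring R] (a b : ℕ → R) (N : ℕ) :
    ∑ k ∈ Icc 1 N, a k * ∑ j ∈ Icc 1 k, b j = ∑ j ∈ Icc 1 N, b j * ∑ k ∈ Icc j N, a k := by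
  simp only [mul_sum]
  rw [sum_comm' (t' := Icc 1 N) (s' := fun j => Icc j N)]
  · simp only [mul_comm]
  · intro k j
    simp only [mem_Icc]
    omega

theorem exists_le_div_sum_of_sum_mul_le {ι 𝕜 : Type*} [Field 𝕜] [LinearOrder 𝕜]
    [IsStrictOrderedRing 𝕜] {s : Finset ι} (hs : s.Nonempty) {w a : ι → 𝕜}
    (hw : ∀ i ∈ s, 0 < w i) {B : 𝕜} (h : ∑ i ∈ s, w i * a i ≤ B) :
    ∃ i ∈ s, a i ≤ B / ∑ i ∈ s, w i := by
  have hW : 0 < ∑ i ∈ s, w i := sum_pos hw hs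
  obtain ⟨i, hi, hle⟩ := exists_le_of_sum_le hs (f := fun i => w i * a i)
    (g := fun i => w i * (B / ∑ i ∈ s, w i)) (by rwa [← sum_mul, mul_div_cancel₀ B hW.ne'])
  exact ⟨i, hi, le_of_mul_le_mul_left hle (hw i hi)⟩

theorem pos_of_eq_one_sub_mul {α Γ : ℕ → ℝ} (hΓ1 : Γ 1 = 1) (hα : ∀ k, α (k + 2) < 1)
    (hΓ : ∀ k, Γ (k + 2) = (1 - α (k + 2)) * Γ (k + 1)) : ∀ k, 0 < Γ (k + 1)
  | 0 => hΓ1 ▸ one_pos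
  | k + 1 => by
    rw [hΓ k]
    exact mul_pos (sub_pos.2 (hα k)) (pos_of_eq_one_sub_mul hΓ1 hα hΓ k)

section AcceleratedGradient

variable {E : Type*} [NormedAddCommGroup E] [InnerProductSpace ℝ E]

-- The factor `1 - a (k + 1)` lets the induction start at `k = 0`, where `Γ 0` is unconstrained.
theorem one_sub_mul_norm_sq_le_of_recursion {d v : ℕ → E} {a c Γ : ℕ → ℝ} (hd0 : d 0 = 0)
    (hd : ∀ k, d (k + 1) = (1 - a (k + 1)) • d k - c (k + 1) • v (k + 1))
    (ha : ∀ k, a (k + 1) ∈ Set.Ioc 0 1) (hΓpos : ∀ k, 0 < Γ (k + 1))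
    (hΓ : ∀ k, Γ (k + 2) = (1 - a (k + 2)) * Γ (k + 1)) (k : ℕ) :
    (1 - a (k + 1)) * ‖d k‖ ^ 2
      ≤ Γ (k + 1) * ∑ j ∈ Icc 1 k, c j ^ 2 / (a j * Γ j) * ‖v j‖ ^ 2 := by
  induction k with
  | zero => simp [hd0]
  | succ k ih =>
    have hnorm : ‖d (k + 1)‖ ^ 2
        ≤ Γ (k + 1) * ∑ j ∈ Icc 1 (k + 1), c j ^ 2 / (a j * Γ j) * ‖v j‖ ^ 2 := by
      rw [hd k, sum_Icc_succ_top (by omega), mul_add]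
      refine (norm_one_sub_smul_sub_smul_sq_le (ha k).1 (ha k).2 _ _ _).trans
        (add_le_add ih (le_of_eq ?_))
      field_simp [(hΓpos k).ne']
    rw [hΓ k, mul_assoc]
    exact mul_le_mul_of_nonneg_left hnorm (sub_nonneg.2 (ha (k + 1)).2)

structure IsAGSequence (g : E → E) (α β lam : ℕ → ℝ) (x xag xmd : ℕ → E) : Prop where
  ag_zero : xag 0 = x 0
  md_succ : ∀ k, xmd (k + 1) = (1 - α (k + 1)) • xag k + α (k + 1) • x k
  x_succ : ∀ k, x (k + 1) = x k - lam (k + 1) • g (xmd (k + 1))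
  ag_succ : ∀ k, xag (k + 1) = xmd (k + 1) - β (k + 1) • g (xmd (k + 1))

variable {g : E → E} {α β lam Γ : ℕ → ℝ} {x xag xmd : ℕ → E}

theorem IsAGSequence.sub_md_succ (h : IsAGSequence g α β lam x xag xmd) (k : ℕ) :
    x k - xmd (k + 1) = (1 - α (k + 1)) • (x k - xag k) := by
  rw [h.md_succ]
  module

theorem IsAGSequence.sub_ag_succ (h : IsAGSequence g α β lam x xag xmd) (k : ℕ) :
    x (k + 1) - xag (k + 1)
      = (1 - α (k + 1)) • (x k - xag k) - (lam (k + 1) - β (k + 1)) • g (xmd (k + 1)) := by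
  rw [h.x_succ, h.ag_succ, h.md_succ]
  module

theorem IsAGSequence.norm_sub_md_sq_le (h : IsAGSequence g α β lam x xag xmd)
    (hα : ∀ k, α (k + 1) ∈ Set.Ioc 0 1) (hΓpos : ∀ k, 0 < Γ (k + 1))
    (hΓ : ∀ k, Γ (k + 2) = (1 - α (k + 2)) * Γ (k + 1)) (k : ℕ) :
    ‖x k - xmd (k + 1)‖ ^ 2
      ≤ Γ (k + 1) * ∑ j ∈ Icc 1 (k + 1), (lam j - β j) ^ 2 / (α j * Γ j) * ‖g (xmd j)‖ ^ 2 := by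
  have hdev := one_sub_mul_norm_sq_le_of_recursion (d := fun k => x k - xag k)
    (c := fun j => lam j - β j) (v := fun j => g (xmd j)) (sub_eq_zero.2 h.ag_zero.symm)
    h.sub_ag_succ hα hΓpos hΓ k
  have hmono : ∑ j ∈ Icc 1 k, (lam j - β j) ^ 2 / (α j * Γ j) * ‖g (xmd j)‖ ^ 2
      ≤ ∑ j ∈ Icc 1 (k + 1), (lam j - β j) ^ 2 / (α j * Γ j) * ‖g (xmd j)‖ ^ 2 := by
    rw [sum_Icc_succ_top (by omega)]
    have := (hα k).1
    have := hΓpos k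
    exact le_add_of_nonneg_right (by positivity)
  have hα0 := sub_nonneg.2 (hα k).2
  calc ‖x k - xmd (k + 1)‖ ^ 2 = (1 - α (k + 1)) ^ 2 * ‖x k - xag k‖ ^ 2 := by
        rw [h.sub_md_succ, norm_smul, mul_pow, Real.norm_eq_abs, sq_abs]
    _ ≤ (1 - α (k + 1)) * ‖x k - xag k‖ ^ 2 :=
        mul_le_mul_of_nonneg_right (pow_le_of_le_one hα0 (by linarith [(hα k).1]) two_ne_zero)
          (sq_nonneg _)
    _ ≤ _ := hdev.trans (mul_le_mul_of_nonneg_left hmono (hΓpos k).le)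

theorem IsAGSequence.sum_mul_norm_sq_le [CompleteSpace E] {Ψ : E → ℝ} {L : ℝ}
    (hg : ∀ x, HasGradientAt Ψ (g x) x) (hL : ∀ x y, ‖g x - g y‖ ≤ L * ‖x - y‖) (hL0 : 0 ≤ L)
    (h : IsAGSequence g α β lam x xag xmd) (hlam : ∀ k, 0 ≤ lam (k + 1))
    (hα : ∀ k, α (k + 1) ∈ Set.Ioc 0 1) (hΓpos : ∀ k, 0 < Γ (k + 1))
    (hΓ : ∀ k, Γ (k + 2) = (1 - α (k + 2)) * Γ (k + 1)) (N : ℕ) :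
    ∑ k ∈ Icc 1 N, (lam k * (1 - L * lam k)
        - L / 2 * ((lam k - β k) ^ 2 / (α k * Γ k)) * ∑ τ ∈ Icc k N, Γ τ) * ‖g (xmd k)‖ ^ 2
      ≤ Ψ (x 0) - Ψ (x N) := by
  set u : ℕ → ℝ := fun k => lam k * (1 - L * lam k) * ‖g (xmd k)‖ ^ 2
    - L / 2 * (Γ k * ∑ j ∈ Icc 1 k, (lam j - β j) ^ 2 / (α j * Γ j) * ‖g (xmd j)‖ ^ 2)
  have hstep (k : ℕ) : Ψ (x (k + 1)) ≤ Ψ (x k) - u (k + 1) := by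
    rw [h.x_succ]
    have hdesc := le_sub_mul_norm_sq_of_gradient_step hg hL hL0 (hlam k) (x k) (xmd (k + 1))
    have hdev := mul_le_mul_of_nonneg_left (h.norm_sub_md_sq_le hα hΓpos hΓ k)
      (div_nonneg hL0 zero_le_two)
    simp only [u]
    linarith
  have htel := sum_Icc_le_sub_of_le_sub (f := fun k => Ψ (x k)) hstep N
  simp only [u] at htel
  rw [sum_sub_distrib, ← mul_sum, sum_Icc_mul_sum_Icc_eq] at htel
  refine le_of_eq_of_le ?_ htel
  rw [mul_sum, ← sum_sub_distrib]
  refine sum_congr rfl fun k _ => ?_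
  ring

end AcceleratedGradient

theorem ag_nonconvex_convergence_general {n : ℕ}
    (Ψ : EuclideanSpace ℝ (Fin n) → ℝ) (g : EuclideanSpace ℝ (Fin n) → EuclideanSpace ℝ (Fin n))
    (LΨ Ψstar : ℝ)
    (hg : ∀ x, HasGradientAt Ψ (g x) x)
    (hL : ∀ x y, ‖g x - g y‖ ≤ LΨ * ‖x - y‖)
    (hbd : ∀ x, Ψstar ≤ Ψ x)
    (α β lam Γ : ℕ → ℝ)
    (hα1 : α 1 = 1) (hα : ∀ k ≥ 2, α k ∈ Set.Ioo (0:ℝ) 1)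
    (hlam : ∀ k ≥ 1, 0 < lam k)
    (hΓ1 : Γ 1 = 1) (hΓ : ∀ k ≥ 2, Γ k = (1 - α k) * Γ (k - 1))
    (x xag xmd : ℕ → EuclideanSpace ℝ (Fin n))
    (hag0 : xag 0 = x 0)
    (hmd : ∀ k ≥ 1, xmd k = (1 - α k) • xag (k - 1) + α k • x (k - 1))
    (hx : ∀ k ≥ 1, x k = x (k - 1) - lam k • g (xmd k))
    (hxag : ∀ k ≥ 1, xag k = xmd k - β k • g (xmd k))
    (N : ℕ) (hN : 1 ≤ N)
    (C : ℕ → ℝ)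
    (hC : ∀ k, C k = 1 - LΨ * lam k -
      LΨ * (lam k - β k) ^ 2 / (2 * α k * Γ k * lam k) * ∑ τ ∈ Finset.Icc k N, Γ τ)
    (hCpos : ∀ k ∈ Finset.Icc 1 N, 0 < C k) :
    ∃ k ∈ Finset.Icc 1 N,
      ‖g (xmd k)‖ ^ 2 ≤ (Ψ (x 0) - Ψstar) / ∑ j ∈ Finset.Icc 1 N, lam j * C j := by
  have hα' : ∀ k, α (k + 1) ∈ Set.Ioc 0 1
    | 0 => by simp [hα1]
    | k + 1 => Set.Ioo_subset_Ioc_self (hα (k + 2) (by omega))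
  have hΓ' (k : ℕ) : Γ (k + 2) = (1 - α (k + 2)) * Γ (k + 1) := hΓ (k + 2) (by omega)
  have hΓpos := pos_of_eq_one_sub_mul hΓ1 (fun k => (hα (k + 2) (by omega)).2) hΓ'
  have hAG : IsAGSequence g α β lam x xag xmd :=
    ⟨hag0, fun k => by simpa using hmd (k + 1) (by omega),
      fun k => by simpa using hx (k + 1) (by omega), fun k => hxag (k + 1) (by omega)⟩
  have hsum : ∑ k ∈ Icc 1 N, lam k * C k * ‖g (xmd k)‖ ^ 2 ≤ Ψ (x 0) - Ψstar := by
    -- In dimension 0 nothing forces `0 ≤ LΨ`, but then every gradient vanishes.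
    rcases subsingleton_or_nontrivial (EuclideanSpace ℝ (Fin n)) with hE | hE
    · simp only [norm_of_subsingleton, ne_eq, OfNat.ofNat_ne_zero, not_false_eq_true, zero_pow,
        mul_zero, sum_const_zero, sub_nonneg]
      exact hbd (x 0)
    · have hsum := hAG.sum_mul_norm_sq_le hg hL (lipschitz_const_nonneg hL)
        (fun k => (hlam (k + 1) (by omega)).le) hα' hΓpos hΓ' N
      refine le_of_eq_of_le (sum_congr rfl fun k hk => ?_) (hsum.trans (by linarith [hbd (x N)]))
      have hk := (mem_Icc.1 hk).1
      rw [hC k]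
      field_simp [(hlam k hk).ne']
  exact exists_le_div_sum_of_sum_mul_le ⟨1, by simp [hN]⟩
    (fun k hk => mul_pos (hlam k (mem_Icc.1 hk).1) (hCpos k hk)) hsum

theorem ag_nonconvex_convergence {n : ℕ}
    (Ψ : EuclideanSpace ℝ (Fin n) → ℝ) (g : EuclideanSpace ℝ (Fin n) → EuclideanSpace ℝ (Fin n))
    (LΨ Ψstar : ℝ)
    (hg : ∀ x, HasGradientAt Ψ (g x) x)
    (hL : ∀ x y, ‖g x - g y‖ ≤ LΨ * ‖x - y‖)
    (hbd : ∀ x, Ψstar ≤ Ψ x)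
    (α β lam Γ : ℕ → ℝ)
    (hα1 : α 1 = 1) (hα : ∀ k ≥ 2, α k ∈ Set.Ioo (0:ℝ) 1)
    (hβ : ∀ k ≥ 1, 0 < β k) (hlam : ∀ k ≥ 1, 0 < lam k)
    (hΓ1 : Γ 1 = 1) (hΓ : ∀ k ≥ 2, Γ k = (1 - α k) * Γ (k - 1))
    (x xag xmd : ℕ → EuclideanSpace ℝ (Fin n))
    (hag0 : xag 0 = x 0)
    (hmd : ∀ k ≥ 1, xmd k = (1 - α k) • xag (k - 1) + α k • x (k - 1))
    (hx : ∀ k ≥ 1, x k = x (k - 1) - lam k • g (xmd k))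
    (hxag : ∀ k ≥ 1, xag k = xmd k - β k • g (xmd k))
    (N : ℕ) (hN : 1 ≤ N)
    (C : ℕ → ℝ)
    (hC : ∀ k, C k = 1 - LΨ * lam k -
      LΨ * (lam k - β k) ^ 2 / (2 * α k * Γ k * lam k) * ∑ τ ∈ Finset.Icc k N, Γ τ)
    (hCpos : ∀ k ∈ Finset.Icc 1 N, 0 < C k) :
    ∃ k ∈ Finset.Icc 1 N,
      ‖g (xmd k)‖ ^ 2 ≤ (Ψ (x 0) - Ψstar) / ∑ j ∈ Finset.Icc 1 N, lam j * C j :=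
  ag_nonconvex_convergence_general Ψ g LΨ Ψstar hg hL hbd α β lam Γ hα1 hα hlam hΓ1 hΓ x xag xmd
    hag0 hmd hx hxag N hN C hC hCpos
end

section
/- Let $\Psi: \mathbb{R}^n \to \mathbb{R}$ be convex, differentiable with $L_\Psi$-Lipschitz gradient, with minimizer $x^*$. Consider the AG iteration $x_k^{md} = (1-\alpha_k)x_{k-1}^{ag} + \alpha_k x_{k-1}$, $x_k = x_{k-1} - \lambda_k\nabla\Psi(x_k^{md})$, $x_k^{ag} = x_k^{md} - \beta_k\nabla\Psi(x_k^{md})$, starting from $x_0^{ag} = x_0$, with $\alpha_1 = 1$, $\alpha_k \in (0,1)$ for $k \ge 2$. If $\alpha_k\lambda_k \le \beta_k < 1/L_\Psi$ for all $k$ and the sequence $\alpha_k/(\lambda_k\Gamma_k)$ is nonincreasing (where $\Gamma_1 = 1$, $\Gamma_k = (1-\alpha_k)\Gamma_{k-1}$), then for any $N \ge 1$: $\Psi(x_N^{ag}) - \Psi(x^*) \le \frac{\Gamma_N\|x_0 - x^*\|^2}{2\lambda_1}$. -/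
/-!
The gradient inequality at `xmd k` (tested against `xag (k-1)` and `x*`) and the descent lemma
for the gradient step from `xmd k` to `xag k` give the one-step estimate
`Ψ(xag k) - Ψ x* ≤ (1 - α k) (Ψ(xag (k-1)) - Ψ x*) + α k / (2 λ k) (‖x (k-1) - x*‖² - ‖x k - x*‖²)`,
the condition `α k λ k ≤ β k < 1 / L` absorbing the `‖∇Ψ (xmd k)‖²` terms. Dividing by `Γ k`
turns `1 - α k` into `Γ (k-1) / Γ k`, and since the weights `α k / (λ k Γ k)` do not increase,
the distance terms telescope to at most `α 1 / (λ 1 Γ 1) ‖x 0 - x*‖² = ‖x 0 - x*‖² / λ 1`.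
-/

open RealInnerProductSpace

section Gradient

variable {E : Type*} [NormedAddCommGroup E] [InnerProductSpace ℝ E] [CompleteSpace E]
  {f : E → ℝ}

theorem HasGradientAt.hasDerivAt_lineMap {f' a b : E} {t : ℝ}
    (h : HasGradientAt f f' (AffineMap.lineMap a b t)) :
    HasDerivAt (f ∘ AffineMap.lineMap (k := ℝ) a b) ⟪f', b - a⟫ t := by
  have := h.hasFDerivAt.comp_hasDerivAt t AffineMap.hasDerivAt_lineMap
  rwa [InnerProductSpace.toDual_apply_apply] at this

theorem ConvexOn.add_inner_le_of_hasGradientAt {s : Set E} (hf : ConvexOn ℝ s f) {f' a b : E}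
    (ha : a ∈ s) (hb : b ∈ s) (h : HasGradientAt f f' a) : f a + ⟪f', b - a⟫ ≤ f b := by
  rw [← AffineMap.lineMap_apply_zero (k := ℝ) a b] at h
  have := (hf.comp_affineMap (AffineMap.lineMap a b)).le_slope_of_hasDerivAt
    (by simpa) (by simpa) one_pos h.hasDerivAt_lineMap
  simp only [slope_def_field, Function.comp_apply, AffineMap.lineMap_apply_one,
    AffineMap.lineMap_apply_zero, sub_zero, div_one] at this
  linarith

variable {g : E → E} {L : ℝ}

theorem le_add_inner_add_of_lipschitz_gradient (hg : ∀ x, HasGradientAt f (g x) x)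
    (hL : ∀ x y, ‖g x - g y‖ ≤ L * ‖x - y‖) (a b : E) :
    f b ≤ f a + ⟪g a, b - a⟫ + L / 2 * ‖b - a‖ ^ 2 := by
  set F : ℝ → ℝ := fun t ↦
    (f ∘ AffineMap.lineMap a b) t - t * ⟪g a, b - a⟫ - L / 2 * t ^ 2 * ‖b - a‖ ^ 2
  set F' : ℝ → ℝ := fun t ↦
    ⟪g (AffineMap.lineMap a b t), b - a⟫ - ⟪g a, b - a⟫ - L * t * ‖b - a‖ ^ 2
  have hF : ∀ t, HasDerivAt F (F' t) t := fun t ↦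
    (((hg _).hasDerivAt_lineMap.sub ((hasDerivAt_id t).mul_const _)).sub
      (((hasDerivAt_pow 2 t).const_mul (L / 2)).mul_const _)).congr_deriv
      (by simp only [F']; ring)
  have hF'_nonpos : ∀ t ∈ interior (Set.Ici (0 : ℝ)), F' t ≤ 0 := by
    intro t ht
    rw [interior_Ici] at ht
    have hdist : ‖AffineMap.lineMap a b t - a‖ = t * ‖b - a‖ := by
      rw [← vsub_eq_sub, AffineMap.lineMap_vsub_left, norm_smul, Real.norm_of_nonneg ht.le,
        vsub_eq_sub]
    have := calc ⟪g (AffineMap.lineMap a b t) - g a, b - a⟫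
        _ ≤ ‖g (AffineMap.lineMap a b t) - g a‖ * ‖b - a‖ := real_inner_le_norm _ _
        _ ≤ L * ‖AffineMap.lineMap a b t - a‖ * ‖b - a‖ := by gcongr; exact hL _ _
        _ = L * t * ‖b - a‖ ^ 2 := by rw [hdist]; ring
    rw [inner_sub_left] at this
    simp only [F']
    linarith
  have hanti : AntitoneOn F (Set.Ici 0) :=
    antitoneOn_of_hasDerivWithinAt_nonpos (convex_Ici 0)
      (fun t _ ↦ (hF t).continuousAt.continuousWithinAt) (fun t _ ↦ (hF t).hasDerivWithinAt)
      hF'_nonpos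
  have hF0 : F 0 = f a := by simp [F]
  have hF1 : F 1 = f b - ⟪g a, b - a⟫ - L / 2 * ‖b - a‖ ^ 2 := by simp [F]
  linarith [hanti Set.self_mem_Ici (Set.mem_Ici.2 zero_le_one) zero_le_one]

theorem le_sub_of_gradient_step (hg : ∀ x, HasGradientAt f (g x) x)
    (hL : ∀ x y, ‖g x - g y‖ ≤ L * ‖x - y‖) (y : E) (b : ℝ) :
    f (y - b • g y) ≤ f y - b * (1 - L * b / 2) * ‖g y‖ ^ 2 := by
  have := le_add_inner_add_of_lipschitz_gradient hg hL y (y - b • g y)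
  rw [sub_sub_cancel_left, inner_neg_right, real_inner_smul_right, real_inner_self_eq_norm_sq,
    norm_neg, norm_smul, mul_pow, Real.norm_eq_abs, sq_abs] at this
  linarith

theorem ag_step_gap_le (hg : ∀ x, HasGradientAt f (g x) x)
    (hL : ∀ x y, ‖g x - g y‖ ≤ L * ‖x - y‖) (hconv : ConvexOn ℝ Set.univ f)
    {a b l : ℝ} {xag' x' xmd xag x z : E} (ha₀ : 0 ≤ a) (ha₁ : a ≤ 1) (hl : 0 < l)
    (hab : a * l ≤ b) (hLb : L * b ≤ 1)
    (hmd : xmd = (1 - a) • xag' + a • x') (hx : x = x' - l • g xmd)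
    (hag : xag = xmd - b • g xmd) :
    f xag - f z ≤ (1 - a) * (f xag' - f z) + a / (2 * l) * (‖x' - z‖ ^ 2 - ‖x - z‖ ^ 2) := by
  set G := g xmd
  have hdescent : f xag ≤ f xmd - b * (1 - L * b / 2) * ‖G‖ ^ 2 :=
    hag ▸ le_sub_of_gradient_step hg hL xmd b
  have hconvex : f xmd ≤ (1 - a) * f xag' + a * f z + a * ⟪G, x' - z⟫ := by
    have h₁ := hconv.add_inner_le_of_hasGradientAt trivial trivial (hg xmd) (b := xag')
    have h₂ := hconv.add_inner_le_of_hasGradientAt trivial trivial (hg xmd) (b := z)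
    have hsplit : (1 - a) * ⟪G, xag' - xmd⟫ + a * ⟪G, z - xmd⟫ + a * ⟪G, x' - z⟫ = 0 := by
      simp only [← real_inner_smul_right, ← inner_add_right]
      rw [hmd, ← inner_zero_right G]
      congr 1
      module
    linarith [mul_le_mul_of_nonneg_left h₁ (sub_nonneg.2 ha₁), mul_le_mul_of_nonneg_left h₂ ha₀]
  have hdist : ‖x - z‖ ^ 2 = ‖x' - z‖ ^ 2 - 2 * l * ⟪G, x' - z⟫ + l ^ 2 * ‖G‖ ^ 2 := by
    rw [hx, show x' - l • G - z = (x' - z) - l • G by abel, norm_sub_sq_real,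
      real_inner_smul_right, norm_smul, mul_pow, Real.norm_eq_abs, sq_abs, real_inner_comm]
    ring
  have hdist' : a / (2 * l) * (‖x' - z‖ ^ 2 - ‖x - z‖ ^ 2)
      = a * ⟪G, x' - z⟫ - a * l / 2 * ‖G‖ ^ 2 := by
    rw [hdist]; field_simp; ring
  have hcoef : a * l / 2 ≤ b * (1 - L * b / 2) := by
    have hb : 0 ≤ b := (mul_nonneg ha₀ hl.le).trans hab
    nlinarith [mul_nonneg hb (sub_nonneg.2 hLb)]
  rw [hdist']
  linarith [mul_le_mul_of_nonneg_right hcoef (sq_nonneg ‖G‖)]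

end Gradient

theorem le_of_telescoping_of_antitone {e c D : ℕ → ℝ} (hc : ∀ k ≥ 1, c (k + 1) ≤ c k)
    (hD : ∀ k, 0 ≤ D k) (he₁ : e 1 ≤ c 1 * (D 0 - D 1))
    (he : ∀ k ≥ 1, e (k + 1) ≤ e k + c (k + 1) * (D k - D (k + 1))) :
    ∀ N ≥ 1, e N + c N * D N ≤ c 1 * D 0 := by
  intro N hN
  induction N, hN using Nat.le_induction with
  | base => linarith
  | succ k hk ih => linarith [he k hk, mul_le_mul_of_nonneg_right (hc k hk) (hD k)]

theorem ag_gap_le_of_recursion {δ D α lam Γ : ℕ → ℝ}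
    (hα1 : α 1 = 1) (hα_nonneg : ∀ k ≥ 1, 0 ≤ α k) (hα_lt : ∀ k ≥ 2, α k < 1)
    (hΓ1 : Γ 1 = 1) (hΓ : ∀ k ≥ 2, Γ k = (1 - α k) * Γ (k - 1))
    (hlam : ∀ k ≥ 1, 0 < lam k)
    (hmono : ∀ k ≥ 1, α (k + 1) / (lam (k + 1) * Γ (k + 1)) ≤ α k / (lam k * Γ k))
    (hD : ∀ k, 0 ≤ D k)
    (hδ : ∀ k ≥ 1, δ k ≤ (1 - α k) * δ (k - 1) + α k / (2 * lam k) * (D (k - 1) - D k)) :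
    ∀ N ≥ 1, δ N ≤ Γ N * D 0 / (2 * lam 1) := by
  have hΓ_succ : ∀ k ≥ 1, Γ (k + 1) = (1 - α (k + 1)) * Γ k :=
    fun k hk ↦ hΓ (k + 1) (by omega)
  have hΓ_pos : ∀ k ≥ 1, 0 < Γ k := by
    intro k hk
    induction k, hk using Nat.le_induction with
    | base => simp [hΓ1]
    | succ k hk ih =>
      rw [hΓ_succ k hk]
      exact mul_pos (sub_pos.2 (hα_lt (k + 1) (by omega))) ih
  set c : ℕ → ℝ := fun k ↦ α k / (lam k * Γ k) / 2
  have hc1 : c 1 = 1 / (2 * lam 1) := by simp only [c, hα1, hΓ1]; ring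
  have hfirst : δ 1 / Γ 1 ≤ c 1 * (D 0 - D 1) := by
    simpa [hΓ1, hα1, hc1, div_eq_mul_inv, mul_comm] using hδ 1 le_rfl
  have hnormalized :
      ∀ k ≥ 1, δ (k + 1) / Γ (k + 1) ≤ δ k / Γ k + c (k + 1) * (D k - D (k + 1)) := by
    intro k hk
    have hstep := div_le_div_of_nonneg_right (hδ (k + 1) (by omega)) (hΓ_pos (k + 1) (by omega)).le
    have := (hlam (k + 1) (by omega)).ne'
    have := (hΓ_pos k hk).ne'
    have := (sub_pos.2 (hα_lt (k + 1) (by omega))).ne'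
    refine hstep.trans_eq ?_
    simp only [c, hΓ_succ k hk, Nat.add_sub_cancel]
    field_simp
  have htelescope := le_of_telescoping_of_antitone (e := fun k ↦ δ k / Γ k)
    (fun k hk ↦ div_le_div_of_nonneg_right (hmono k hk) zero_le_two) hD hfirst hnormalized
  intro N hN
  have hcN : 0 ≤ c N := by
    have := hα_nonneg N hN; have := hlam N hN; have := hΓ_pos N hN; positivity
  calc δ N = Γ N * (δ N / Γ N) := by field_simp [(hΓ_pos N hN).ne']
    _ ≤ Γ N * (c 1 * D 0) := by
        gcongr
        · exact (hΓ_pos N hN).le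
        · linarith [htelescope N hN, mul_nonneg hcN (hD N)]
    _ = Γ N * D 0 / (2 * lam 1) := by rw [hc1]; ring

theorem ag_convex_function_gap_general {n : ℕ}
    (Ψ : EuclideanSpace ℝ (Fin n) → ℝ) (g : EuclideanSpace ℝ (Fin n) → EuclideanSpace ℝ (Fin n))
    (LΨ : ℝ)
    (hg : ∀ x, HasGradientAt Ψ (g x) x)
    (hL : ∀ x y, ‖g x - g y‖ ≤ LΨ * ‖x - y‖)
    (hconv : ConvexOn ℝ Set.univ Ψ)
    (xstar : EuclideanSpace ℝ (Fin n))
    (α β lam Γ : ℕ → ℝ)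
    (hα1 : α 1 = 1) (hα : ∀ k ≥ 2, α k ∈ Set.Ioo (0:ℝ) 1)
    (hΓ1 : Γ 1 = 1) (hΓ : ∀ k ≥ 2, Γ k = (1 - α k) * Γ (k - 1))
    (hstep : ∀ k ≥ 1, α k * lam k ≤ β k ∧ β k < 1 / LΨ)
    (hlam : ∀ k ≥ 1, 0 < lam k)
    (hmono : ∀ k ≥ 1, α (k + 1) / (lam (k + 1) * Γ (k + 1)) ≤ α k / (lam k * Γ k))
    (x xag xmd : ℕ → EuclideanSpace ℝ (Fin n))
    (hmd : ∀ k ≥ 1, xmd k = (1 - α k) • xag (k - 1) + α k • x (k - 1))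
    (hx : ∀ k ≥ 1, x k = x (k - 1) - lam k • g (xmd k))
    (hxag : ∀ k ≥ 1, xag k = xmd k - β k • g (xmd k)) :
    ∀ N ≥ 1, Ψ (xag N) - Ψ xstar ≤ Γ N * ‖x 0 - xstar‖ ^ 2 / (2 * lam 1) := by
  have hα_mem : ∀ k ≥ 1, 0 < α k ∧ α k ≤ 1 := by
    intro k hk
    rcases hk.eq_or_lt with rfl | hk
    · simp [hα1]
    · exact ⟨(hα k hk).1, (hα k hk).2.le⟩
  have hLβ : ∀ k ≥ 1, LΨ * β k ≤ 1 := by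
    intro k hk
    have hβ : 0 < β k := (mul_pos (hα_mem k hk).1 (hlam k hk)).trans_le (hstep k hk).1
    have hLpos : 0 < LΨ := one_div_pos.mp (hβ.trans (hstep k hk).2)
    have := mul_lt_mul_of_pos_left (hstep k hk).2 hLpos
    rw [mul_one_div_cancel hLpos.ne'] at this
    exact this.le
  refine ag_gap_le_of_recursion hα1 (fun k hk ↦ (hα_mem k hk).1.le) (fun k hk ↦ (hα k hk).2)
    hΓ1 hΓ hlam hmono (fun k ↦ sq_nonneg ‖x k - xstar‖) fun k hk ↦ ?_
  exact ag_step_gap_le hg hL hconv (hα_mem k hk).1.le (hα_mem k hk).2 (hlam k hk)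
    (hstep k hk).1 (hLβ k hk) (hmd k hk) (hx k hk) (hxag k hk)

theorem ag_convex_function_gap {n : ℕ}
    (Ψ : EuclideanSpace ℝ (Fin n) → ℝ) (g : EuclideanSpace ℝ (Fin n) → EuclideanSpace ℝ (Fin n))
    (LΨ : ℝ)
    (hg : ∀ x, HasGradientAt Ψ (g x) x)
    (hL : ∀ x y, ‖g x - g y‖ ≤ LΨ * ‖x - y‖)
    (hconv : ConvexOn ℝ Set.univ Ψ)
    (xstar : EuclideanSpace ℝ (Fin n)) (hmin : ∀ z, Ψ xstar ≤ Ψ z)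
    (α β lam Γ : ℕ → ℝ)
    (hα1 : α 1 = 1) (hα : ∀ k ≥ 2, α k ∈ Set.Ioo (0:ℝ) 1)
    (hΓ1 : Γ 1 = 1) (hΓ : ∀ k ≥ 2, Γ k = (1 - α k) * Γ (k - 1))
    (hstep : ∀ k ≥ 1, α k * lam k ≤ β k ∧ β k < 1 / LΨ)
    (hlam : ∀ k ≥ 1, 0 < lam k)
    (hmono : ∀ k ≥ 1, α (k + 1) / (lam (k + 1) * Γ (k + 1)) ≤ α k / (lam k * Γ k))
    (x xag xmd : ℕ → EuclideanSpace ℝ (Fin n))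
    (hag0 : xag 0 = x 0)
    (hmd : ∀ k ≥ 1, xmd k = (1 - α k) • xag (k - 1) + α k • x (k - 1))
    (hx : ∀ k ≥ 1, x k = x (k - 1) - lam k • g (xmd k))
    (hxag : ∀ k ≥ 1, xag k = xmd k - β k • g (xmd k)) :
    ∀ N ≥ 1, Ψ (xag N) - Ψ xstar ≤ Γ N * ‖x 0 - xstar‖ ^ 2 / (2 * lam 1) :=
  ag_convex_function_gap_general Ψ g LΨ hg hL hconv xstar α β lam Γ hα1 hα hΓ1 hΓ hstep hlam hmono x
    xag xmd hmd hx hxag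
end

section
/- With the specific stepsizes $\alpha_k = 2/(k+1)$, $\beta_k = 1/(2L_\Psi)$, and $\lambda_k \in [\beta_k, (1+\alpha_k/4)\beta_k]$, the constant $C_k = 1 - L_\Psi\lambda_k - \frac{L_\Psi(\lambda_k-\beta_k)^2}{2\alpha_k\Gamma_k\lambda_k}\sum_{\tau=k}^N\Gamma_\tau$ satisfies $C_k \ge 11/32$ and $\lambda_k C_k \ge 1/(6L_\Psi)$ for all $1 \le k \le N$, where $\Gamma_k = 2/(k(k+1))$. -/
/-!
Write `b = 1/(2L_Ψ)`. Since `λ_k - b ≤ α_k b/4 = b/(2(k+1))` and `2α_kΓ_k = 8/(k(k+1)²)`, the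
correction term equals `L_Ψ((λ_k-b)(k+1))² · k∑Γ_τ / (8λ_k) ≤ L_Ψ(b/2)² · 2/(8λ_k) ≤ 1/32`,
using the telescoping bound `k∑_{τ≥k}Γ_τ ≤ 2`. With `L_Ψλ_k ≤ (5/4)L_Ψb = 5/8` this gives
`C_k ≥ 1 - 5/8 - 1/32 = 11/32`, and then `λ_kC_k ≥ (11/32)b = 11/(64L_Ψ) ≥ 1/(6L_Ψ)`.
-/

open Finset

lemma sum_Icc_two_div_mul_add_one_le {k : ℕ} (hk : 0 < k) (N : ℕ) :
    ∑ τ ∈ Icc k N, 2 / ((τ : ℝ) * (τ + 1)) ≤ 2 / k := by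
  rcases le_or_gt k N with hkN | hNk
  · have htel : ∀ τ ∈ Icc k N,
        2 / ((τ : ℝ) * (τ + 1)) = -(2 / ((τ + 1 : ℕ) : ℝ)) - -(2 / (τ : ℝ)) := by
      intro τ hτ
      have : (τ : ℝ) ≠ 0 := Nat.cast_ne_zero.mpr (by grind)
      push_cast
      field_simp
      ring
    rw [sum_congr rfl htel, sum_Icc_sub hkN fun τ : ℕ => -(2 / (τ : ℝ))]
    have : (0 : ℝ) ≤ 2 / ((N + 1 : ℕ) : ℝ) := by positivity
    linarith
  · rw [Icc_eq_empty_of_lt hNk, sum_empty]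
    positivity

section StepsizeBounds

variable {L b lam k : ℝ}

lemma sub_mul_add_one_le_half (hk : 0 < k) (hlam : lam ≤ (1 + 2 / (k + 1) / 4) * b) :
    (lam - b) * (k + 1) ≤ b / 2 := by
  have : (1 + 2 / (k + 1) / 4) * b * (k + 1) = b * (k + 1) + b / 2 := by
    field_simp
    ring
  nlinarith

lemma mul_le_five_eighths (hL : 0 < L) (hLb : 2 * L * b = 1) (hk : 1 ≤ k)
    (hlam : lam ≤ (1 + 2 / (k + 1) / 4) * b) : L * lam ≤ 5 / 8 := by
  have hα : 2 / (k + 1) ≤ 1 := by rw [div_le_one (by linarith)]; linarith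
  have hb : 0 < b := by nlinarith
  nlinarith

lemma correction_term_le_one_div_thirtyTwo (hL : 0 < L) (hLb : 2 * L * b = 1) (hk : 0 < k)
    (hb : b ≤ lam) (hlam : lam ≤ (1 + 2 / (k + 1) / 4) * b) {S : ℝ} (hS₀ : 0 ≤ S)
    (hS : S ≤ 2 / k) :
    L * (lam - b) ^ 2 / (2 * (2 / (k + 1)) * (2 / (k * (k + 1))) * lam) * S ≤ 1 / 32 := by
  have hb₀ : 0 < b := by nlinarith
  have hlam₀ : 0 < lam := hb₀.trans_le hb
  have hm := sub_mul_add_one_le_half hk hlam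
  have hm₀ : 0 ≤ (lam - b) * (k + 1) := mul_nonneg (by linarith) (by linarith)
  have hkS : k * S ≤ 2 := by rwa [le_div_iff₀' hk] at hS
  calc L * (lam - b) ^ 2 / (2 * (2 / (k + 1)) * (2 / (k * (k + 1))) * lam) * S
      = L * ((lam - b) * (k + 1)) ^ 2 * (k * S) / (8 * lam) := by
        field_simp
        ring
    _ ≤ L * (b / 2) ^ 2 * 2 / (8 * lam) := by gcongr
    _ = 2 * L * b * b / (32 * lam) := by ring
    _ = b / (32 * lam) := by rw [hLb, one_mul]
    _ ≤ 1 / 32 := by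
        rw [div_le_div_iff₀ (by positivity) (by norm_num)]
        linarith

end StepsizeBounds

theorem ag_stepsize_Ck_bound (LΨ : ℝ) (hLΨ : 0 < LΨ)
    (α β lam Γ C : ℕ → ℝ)
    (hα : ∀ k ≥ 1, α k = 2 / ((k : ℝ) + 1))
    (hβ : ∀ k ≥ 1, β k = 1 / (2 * LΨ))
    (hlam : ∀ k ≥ 1, lam k ∈ Set.Icc (β k) ((1 + α k / 4) * β k))
    (hΓ : ∀ k ≥ 1, Γ k = 2 / ((k : ℝ) * ((k : ℝ) + 1)))
    (N : ℕ)
    (hC : ∀ k, C k = 1 - LΨ * lam k -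
      LΨ * (lam k - β k) ^ 2 / (2 * α k * Γ k * lam k) * ∑ τ ∈ Finset.Icc k N, Γ τ) :
    ∀ k, 1 ≤ k → k ≤ N → C k ≥ 11 / 32 ∧ lam k * C k ≥ 1 / (6 * LΨ) := by
  intro k hk _
  obtain ⟨hlo, hhi⟩ := hlam k hk
  rw [hα k hk, hβ k hk] at hhi
  rw [hβ k hk] at hlo
  have hb₀ : 0 < 1 / (2 * LΨ) := by positivity
  have hLb : 2 * LΨ * (1 / (2 * LΨ)) = 1 := by field_simp
  have hk₁ : (1 : ℝ) ≤ k := by exact_mod_cast hk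
  have hΓsum : ∑ τ ∈ Icc k N, Γ τ = ∑ τ ∈ Icc k N, 2 / ((τ : ℝ) * (τ + 1)) :=
    sum_congr rfl fun τ hτ => hΓ τ (hk.trans (mem_Icc.mp hτ).1)
  have hS₀ : 0 ≤ ∑ τ ∈ Icc k N, Γ τ := by rw [hΓsum]; positivity
  have hcorr := correction_term_le_one_div_thirtyTwo hLΨ hLb (by linarith) hlo hhi hS₀
    (hΓsum ▸ sum_Icc_two_div_mul_add_one_le hk N)
  have hCk : C k ≥ 11 / 32 := by
    rw [hC k, hα k hk, hβ k hk, hΓ k hk]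
    linarith [mul_le_five_eighths hLΨ hLb hk₁ hhi]
  refine ⟨hCk, ?_⟩
  calc 1 / (6 * LΨ) ≤ 1 / (2 * LΨ) * (11 / 32) := by
        rw [div_mul_eq_mul_div, div_le_div_iff₀ (by positivity) (by positivity)]
        nlinarith
    _ ≤ lam k * C k := mul_le_mul hlo hCk (by norm_num) (hb₀.le.trans hlo)
end

section
/- Let $\Psi: \mathbb{R}^n \to \mathbb{R}$ be differentiable with $L_\Psi$-Lipschitz gradient, bounded below by $\Psi^*$. Running the AG iteration with $\alpha_k = 2/(k+1)$, $\beta_k = 1/(2L_\Psi)$, and $\lambda_k \in [\beta_k, (1+\alpha_k/4)\beta_k]$ yields, for any $N \ge 1$, $\min_{k=1,\ldots,N}\|\nabla\Psi(x_k^{md})\|^2 \le \frac{6L_\Psi(\Psi(x_0) - \Psi^*)}{N}$. -/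
/-!
The proof is a Lyapunov argument for the potential
`Φ k = Ψ (x k) + 5 L / 2 * (k + 1) * ‖x k - xag k‖ ^ 2`.
The step `x k = x (k-1) - λ_k ∇Ψ(xmd k)` uses a gradient taken at `xmd k`, which lies within
`‖x (k-1) - xag (k-1)‖` of `x (k-1)`; the descent lemma then decreases `Ψ` by
`7 / (24 L) * ‖∇Ψ(xmd k)‖ ^ 2` up to an error `5 L / 2 * ‖x (k-1) - xag (k-1)‖ ^ 2`.
The gap obeys `x k - xag k = (1 - α_k) (x (k-1) - xag (k-1)) - (λ_k - β_k) ∇Ψ(xmd k)` with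
`0 ≤ λ_k - β_k ≤ α_k β_k / 4`, so with `α_k = 2 / (k + 1)` the weight `k + 1` absorbs the error,
and `Φ` drops by at least `‖∇Ψ(xmd k)‖ ^ 2 / (6 L)` per step. Telescoping bounds the sum of
these squared gradients by `6 L (Ψ (x 0) - Ψ*)`, and the minimum is at most the average.
-/

open Finset RealInnerProductSpace

theorem norm_one_sub_smul_sub_smul_sq_le_s12 {F : Type*} [NormedAddCommGroup F] [NormedSpace ℝ F]
    {α δ c : ℝ} (hα₀ : 0 ≤ α) (hα₁ : α ≤ 1) (hδ₀ : 0 ≤ δ) (hδ : δ ≤ α * c) (v w : F) :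
    ‖(1 - α) • v - δ • w‖ ^ 2 ≤ (1 - α) * ‖v‖ ^ 2 + α * c ^ 2 * ‖w‖ ^ 2 := by
  have h : ‖(1 - α) • v - δ • w‖ ≤ (1 - α) * ‖v‖ + α * (c * ‖w‖) := by
    grw [norm_sub_le, norm_smul, norm_smul, Real.norm_of_nonneg (sub_nonneg.2 hα₁),
      Real.norm_of_nonneg hδ₀, hδ, mul_assoc]
  calc ‖(1 - α) • v - δ • w‖ ^ 2 ≤ ((1 - α) * ‖v‖ + α * (c * ‖w‖)) ^ 2 := by gcongr
    _ ≤ (1 - α) * ‖v‖ ^ 2 + α * c ^ 2 * ‖w‖ ^ 2 := by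
      nlinarith [mul_nonneg (mul_nonneg hα₀ (sub_nonneg.2 hα₁)) (sq_nonneg (‖v‖ - c * ‖w‖))]

section LipschitzGradient

variable {E : Type*} [NormedAddCommGroup E] [InnerProductSpace ℝ E] [CompleteSpace E]
  {Ψ : E → ℝ} {g : E → E} {L : ℝ}

theorem abs_sub_sub_inner_le_of_lipschitz_gradient (hg : ∀ z, HasGradientAt Ψ (g z) z)
    (hL : ∀ a b, ‖g a - g b‖ ≤ L * ‖a - b‖) (x y : E) :
    |Ψ y - Ψ x - ⟪g x, y - x⟫| ≤ L / 2 * ‖y - x‖ ^ 2 := by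
  set c : ℝ → E := fun t => x + t • (y - x)
  have hc : ∀ t, HasDerivAt c (y - x) t := fun t => by
    simpa only [one_smul] using ((hasDerivAt_id' t).smul_const (y - x)).const_add x
  have hf : ∀ t, HasDerivAt (fun t => Ψ (c t) - Ψ x - t * ⟪g x, y - x⟫)
      ⟪g (c t) - g x, y - x⟫ t := fun t => by
    have h := (((hg (c t)).hasFDerivAt.comp_hasDerivAt t (hc t)).sub_const (Ψ x)).sub
      ((hasDerivAt_id' t).mul_const ⟪g x, y - x⟫)
    rwa [InnerProductSpace.toDual_apply_apply, one_mul, ← inner_sub_left] at h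
  have hB : ∀ t, HasDerivAt (fun t => L / 2 * t ^ 2 * ‖y - x‖ ^ 2) (L * t * ‖y - x‖ ^ 2) t :=
    fun t => (((hasDerivAt_pow 2 t).const_mul (L / 2)).mul_const _).congr_deriv (by ring)
  have hbound : ∀ t ∈ Set.Ico (0 : ℝ) 1, ‖⟪g (c t) - g x, y - x⟫‖ ≤ L * t * ‖y - x‖ ^ 2 := by
    intro t ht
    calc ‖⟪g (c t) - g x, y - x⟫‖ ≤ ‖g (c t) - g x‖ * ‖y - x‖ := norm_inner_le_norm _ _
      _ ≤ L * ‖c t - x‖ * ‖y - x‖ := by gcongr; exact hL _ _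
      _ = L * t * ‖y - x‖ ^ 2 := by simp [c, norm_smul, abs_of_nonneg ht.1]; ring
  simpa [c] using image_norm_le_of_norm_deriv_right_le_deriv_boundary
    (fun t _ => (hf t).continuousAt.continuousWithinAt) (fun t _ => (hf t).hasDerivWithinAt)
    (by simp [c]) hB hbound (Set.right_mem_Icc.2 zero_le_one)

theorem apply_sub_smul_le_of_lipschitz_gradient (hL0 : 0 < L)
    (hg : ∀ z, HasGradientAt Ψ (g z) z) (hL : ∀ a b, ‖g a - g b‖ ≤ L * ‖a - b‖) {η : ℝ}
    (hη₁ : 1 / 2 ≤ L * η) (hη₂ : L * η ≤ 5 / 8) (x z : E) :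
    Ψ (x - η • g z) ≤ Ψ x - 7 / (24 * L) * ‖g z‖ ^ 2 + 5 * L / 2 * ‖x - z‖ ^ 2 := by
  have hη₀ : 0 ≤ η := nonneg_of_mul_nonneg_right (by linarith) hL0
  have hup := (abs_le.1 (abs_sub_sub_inner_le_of_lipschitz_gradient hg hL z (x - η • g z))).2
  have hlow := (abs_le.1 (abs_sub_sub_inner_le_of_lipschitz_gradient hg hL z x)).1
  have hinner : ⟪g z, x - η • g z - z⟫ = ⟪g z, x - z⟫ - η * ‖g z‖ ^ 2 := by
    rw [sub_right_comm, inner_sub_right, real_inner_smul_right, real_inner_self_eq_norm_sq]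
  have hyoung : ‖x - η • g z - z‖ ^ 2 ≤ 4 * ‖x - z‖ ^ 2 + 4 / 3 * η ^ 2 * ‖g z‖ ^ 2 := by
    have h : ‖x - η • g z - z‖ ≤ ‖x - z‖ + η * ‖g z‖ := by
      calc ‖x - η • g z - z‖ = ‖(x - z) - η • g z‖ := by rw [sub_right_comm]
        _ ≤ ‖x - z‖ + η * ‖g z‖ := by
          grw [norm_sub_le, norm_smul, Real.norm_of_nonneg hη₀]
    nlinarith [norm_nonneg (x - η • g z - z), sq_nonneg (η * ‖g z‖ - 3 * ‖x - z‖)]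
  have hrate : 7 / (24 * L) * ‖g z‖ ^ 2 ≤ (η - 2 * L / 3 * η ^ 2) * ‖g z‖ ^ 2 := by
    refine mul_le_mul_of_nonneg_right ?_ (sq_nonneg _)
    rw [div_le_iff₀ (by positivity)]
    -- `24 t - 16 t ^ 2 - 7 ≥ 0` on `t = L η ∈ [1/2, 5/8]`, between the roots `≈ 0.40` and `≈ 1.10`
    nlinarith [mul_nonneg (sub_nonneg.2 hη₁) (sub_nonneg.2 hη₂)]
  have hyoung' := mul_le_mul_of_nonneg_left hyoung (by positivity : 0 ≤ L / 2)
  linarith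

theorem ag_potential_decrease (hL0 : 0 < L) (hg : ∀ z, HasGradientAt Ψ (g z) z)
    (hL : ∀ a b, ‖g a - g b‖ ≤ L * ‖a - b‖) {m α β η : ℝ} (hm : 1 ≤ m) (hα : α = 2 / (m + 1))
    (hβ : β = 1 / (2 * L)) (hη : η ∈ Set.Icc β ((1 + α / 4) * β)) {x xag xmd x' xag' : E}
    (hmd : xmd = (1 - α) • xag + α • x) (hx' : x' = x - η • g xmd)
    (hag' : xag' = xmd - β • g xmd) :
    Ψ x' + 5 * L / 2 * (m + 1) * ‖x' - xag'‖ ^ 2 + ‖g xmd‖ ^ 2 / (6 * L)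
      ≤ Ψ x + 5 * L / 2 * m * ‖x - xag‖ ^ 2 := by
  obtain ⟨hη₁, hη₂⟩ := hη
  have hα₀ : 0 ≤ α := by rw [hα]; positivity
  have hα₁ : α ≤ 1 := by rw [hα, div_le_one (by linarith)]; linarith
  have hβ₀ : 0 < β := by rw [hβ]; positivity
  have hLβ : L * β = 1 / 2 := by rw [hβ]; field_simp
  have hdescent := apply_sub_smul_le_of_lipschitz_gradient hL0 hg hL (η := η)
    (by nlinarith) (by nlinarith) x xmd
  have hclose : ‖x - xmd‖ ^ 2 ≤ ‖x - xag‖ ^ 2 := by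
    have h : x - xmd = (1 - α) • (x - xag) := by rw [hmd]; module
    rw [h, norm_smul, Real.norm_of_nonneg (by linarith), mul_pow]
    exact mul_le_of_le_one_left (sq_nonneg _) (by nlinarith)
  have hgap : ‖x' - xag'‖ ^ 2 ≤ (1 - α) * ‖x - xag‖ ^ 2 + α * (β / 4) ^ 2 * ‖g xmd‖ ^ 2 := by
    have h : x' - xag' = (1 - α) • (x - xag) - (η - β) • g xmd := by
      rw [hx', hag', hmd]; module
    rw [h]
    exact norm_one_sub_smul_sub_smul_sq_le_s12 hα₀ hα₁ (by linarith) (by linarith) _ _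
  have hweights : (m + 1) * (1 - α) = m - 1 ∧ (m + 1) * α = 2 :=
    ⟨by rw [hα]; field_simp; ring, by rw [hα]; field_simp⟩
  have hpot : 5 * L / 2 * (m + 1) * ‖x' - xag'‖ ^ 2
      ≤ 5 * L / 2 * (m - 1) * ‖x - xag‖ ^ 2 + 5 / 32 * β * ‖g xmd‖ ^ 2 := by
    calc _ ≤ 5 * L / 2 * (m + 1)
          * ((1 - α) * ‖x - xag‖ ^ 2 + α * (β / 4) ^ 2 * ‖g xmd‖ ^ 2) := by gcongr
      _ = _ := by
        linear_combination (5 * L / 2 * ‖x - xag‖ ^ 2) * hweights.1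
          + (5 * L * β ^ 2 / 32 * ‖g xmd‖ ^ 2) * hweights.2 + (5 * β * ‖g xmd‖ ^ 2 / 16) * hLβ
  have hrate : 7 / (24 * L) = 7 / 12 * β ∧ 1 / (6 * L) = β / 3 := by
    constructor <;> (rw [hβ]; ring)
  have hclose' := mul_le_mul_of_nonneg_left hclose (by positivity : 0 ≤ 5 * L / 2)
  have hG : 0 ≤ β * ‖g xmd‖ ^ 2 := by positivity
  rw [← hx', hrate.1] at hdescent
  rw [div_eq_mul_one_div _ (6 * L), hrate.2]
  linarith

end LipschitzGradient

theorem ag_nonconvex_rate {n : ℕ}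
    (Ψ : EuclideanSpace ℝ (Fin n) → ℝ) (g : EuclideanSpace ℝ (Fin n) → EuclideanSpace ℝ (Fin n))
    (LΨ Ψstar : ℝ) (hLΨ : 0 < LΨ)
    (hg : ∀ x, HasGradientAt Ψ (g x) x)
    (hL : ∀ x y, ‖g x - g y‖ ≤ LΨ * ‖x - y‖)
    (hbd : ∀ x, Ψstar ≤ Ψ x)
    (α β lam : ℕ → ℝ)
    (hα : ∀ k ≥ 1, α k = 2 / ((k : ℝ) + 1))
    (hβ : ∀ k ≥ 1, β k = 1 / (2 * LΨ))
    (hlam : ∀ k ≥ 1, lam k ∈ Set.Icc (β k) ((1 + α k / 4) * β k))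
    (x xag xmd : ℕ → EuclideanSpace ℝ (Fin n))
    (hag0 : xag 0 = x 0)
    (hmd : ∀ k ≥ 1, xmd k = (1 - α k) • xag (k - 1) + α k • x (k - 1))
    (hx : ∀ k ≥ 1, x k = x (k - 1) - lam k • g (xmd k))
    (hxag : ∀ k ≥ 1, xag k = xmd k - β k • g (xmd k)) :
    ∀ N : ℕ, 1 ≤ N → ∃ k ∈ Finset.Icc 1 N,
      ‖g (xmd k)‖ ^ 2 ≤ 6 * LΨ * (Ψ (x 0) - Ψstar) / (N : ℝ) := by
  intro N hN
  set Φ : ℕ → ℝ := fun j => Ψ (x j) + 5 * LΨ / 2 * ((j : ℝ) + 1) * ‖x j - xag j‖ ^ 2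
  have hdecrease : ∀ k, ‖g (xmd (k + 1))‖ ^ 2 / (6 * LΨ) ≤ Φ k - Φ (k + 1) := by
    intro k
    have hk : k + 1 ≥ 1 := Nat.le_add_left 1 k
    have h := ag_potential_decrease hLΨ hg hL (m := ((k + 1 : ℕ) : ℝ)) (by simp) (hα _ hk)
      (hβ _ hk) (hlam _ hk) (hmd _ hk) (hx _ hk) (hxag _ hk)
    simp only [Φ, Nat.add_sub_cancel, Nat.cast_add, Nat.cast_one] at h ⊢
    linarith
  have hΦ0 : Φ 0 = Ψ (x 0) := by simp [Φ, hag0]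
  have hΦN : Ψstar ≤ Φ N := (hbd _).trans (le_add_of_nonneg_right (by positivity))
  have htel : ∑ k ∈ range N, ‖g (xmd (k + 1))‖ ^ 2 / (6 * LΨ) ≤ Φ 0 - Φ N :=
    (sum_le_sum fun k _ => hdecrease k).trans_eq (sum_range_sub' Φ N)
  have hsum : ∑ k ∈ range N, ‖g (xmd (k + 1))‖ ^ 2
      ≤ ∑ _k ∈ range N, 6 * LΨ * (Ψ (x 0) - Ψstar) / N := by
    rw [sum_const, card_range, nsmul_eq_mul, mul_div_cancel₀ _ (by positivity),
      ← div_le_iff₀' (by positivity), sum_div]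
    linarith
  obtain ⟨k, hk, hle⟩ := exists_le_of_sum_le (nonempty_range_iff.2 (by omega)) hsum
  exact ⟨k + 1, mem_Icc.2 ⟨le_add_self, mem_range.1 hk⟩, hle⟩
end

section
/- Consider the AG iteration for composite optimization: $x_k^{md} = (1-\alpha_k)x_{k-1}^{ag} + \alpha_k x_{k-1}$, $x_k = \mathcal{P}(x_{k-1}, \nabla\Psi(x_k^{md}), \lambda_k)$, $x_k^{ag} = \mathcal{P}(x_k^{md}, \nabla\Psi(x_k^{md}), \beta_k)$, where $\mathcal{P}(x,y,c) = \mathrm{argmin}_u\{\langle y,u\rangle + \frac{1}{2c}\|u-x\|^2 + \mathcal{X}(u)\}$ with $\mathcal{X}$ proper closed convex. If $\alpha_k\lambda_k \le \beta_k$, then for all $x \in \mathbb{R}^n$: $\langle\nabla\Psi(x_k^{md}), x_k^{ag} - \alpha_k x - (1-\alpha_k)x_{k-1}^{ag}\rangle + \mathcal{X}(x_k^{ag}) \le (1-\alpha_k)\mathcal{X}(x_{k-1}^{ag}) + \alpha_k\mathcal{X}(x) + \frac{\alpha_k}{2\lambda_k}(\|x_{k-1}-x\|^2 - \|x_k - x\|^2)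 - \frac{1}{2\beta_k}\|x_k^{ag} - x_k^{md}\|^2$. -/
/-!
Each prox step satisfies the three-point inequality, because the prox objective is
`1/c`-strongly convex and therefore grows quadratically away from its minimiser. Apply it to
`x_k^{ag}` against `u = (1 - α_k) x_{k-1}^{ag} + α_k x_k`, whose `𝓧`-value is bounded by
convexity, and to `x_k` against `x`, scaled by `α_k`. Since `x_k^{md} - u = α_k (x_{k-1} - x_k)`,
the first inequality leaves a term `α_k² ‖x_k - x_{k-1}‖² / (2β_k)`, which the second one absorbs
precisely when `α_k λ_k ≤ β_k`.
-/

open Filter Topology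
open scoped RealInnerProductSpace

theorem EReal.toReal_le_of_le_coe {x : EReal} {r : ℝ} (hx : x ≠ ⊥) (h : x ≤ r) :
    x.toReal ≤ r := by
  simpa using EReal.toReal_le_toReal h hx (EReal.coe_ne_top r)

theorem convexOn_toReal_of_ereal {E : Type*} [AddCommGroup E] [Module ℝ E] {X : E → EReal}
    (hbot : ∀ u, X u ≠ ⊥)
    (hconv : ∀ u v : E, ∀ a b : ℝ, 0 ≤ a → 0 ≤ b → a + b = 1 →
      X (a • u + b • v) ≤ (a : EReal) * X u + (b : EReal) * X v) :
    ConvexOn ℝ {u | X u ≠ ⊤} (fun u => (X u).toReal) := by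
  have hcombo : ∀ ⦃u⦄, X u ≠ ⊤ → ∀ ⦃v⦄, X v ≠ ⊤ → ∀ ⦃a b : ℝ⦄, 0 ≤ a → 0 ≤ b → a + b = 1 →
      X (a • u + b • v) ≤ ((a * (X u).toReal + b * (X v).toReal : ℝ) : EReal) := by
    intro u hu v hv a b ha hb hab
    simpa [EReal.coe_toReal hu (hbot u), EReal.coe_toReal hv (hbot v)] using
      hconv u v a b ha hb hab
  refine ⟨fun u hu v hv a b ha hb hab => ?_, fun u hu v hv a b ha hb hab => ?_⟩
  · exact ne_top_of_le_ne_top (EReal.coe_ne_top _) (hcombo hu hv ha hb hab)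
  · exact EReal.toReal_le_of_le_coe (hbot _) (hcombo hu hv ha hb hab)

theorem StrongConvexOn.add_sq_le_of_isMinOn {E : Type*} [NormedAddCommGroup E] [NormedSpace ℝ E]
    {s : Set E} {m : ℝ} {F : E → ℝ} {p u : E}
    (hF : StrongConvexOn s m F) (hmin : IsMinOn F s p) (hp : p ∈ s) (hu : u ∈ s) :
    F p + m / 2 * ‖u - p‖ ^ 2 ≤ F u := by
  have hseg : ∀ t ∈ Set.Ioo (0 : ℝ) 1, F p + (1 - t) * (m / 2 * ‖u - p‖ ^ 2) ≤ F u := by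
    rintro t ⟨ht0, ht1⟩
    -- compare `p` with `t • u + (1 - t) • p`, then divide by `t`
    have hmin_t := isMinOn_iff.1 hmin _
      (hF.1 hu hp ht0.le (sub_nonneg.2 ht1.le) (add_sub_cancel t 1))
    have hconv := hF.2 hu hp ht0.le (sub_nonneg.2 ht1.le) (add_sub_cancel t 1)
    simp only [smul_eq_mul] at hconv
    nlinarith
  have hlim : Tendsto (fun t : ℝ => F p + (1 - t) * (m / 2 * ‖u - p‖ ^ 2)) (𝓝[>] 0)
      (𝓝 (F p + m / 2 * ‖u - p‖ ^ 2)) :=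
    tendsto_nhdsWithin_of_tendsto_nhds (Continuous.tendsto' (by fun_prop) _ _ (by simp))
  exact le_of_tendsto hlim (eventually_of_mem (Ioo_mem_nhdsGT one_pos) hseg)

section InnerProductSpace

variable {E : Type*} [NormedAddCommGroup E] [InnerProductSpace ℝ E]

/-- The function minimised by the prox step `𝓟(x₀, y, c)`. -/
noncomputable def proxObjective (f : E → ℝ) (y x₀ : E) (c : ℝ) (u : E) : ℝ :=
  ⟪y, u⟫ + ‖u - x₀‖ ^ 2 / (2 * c) + f u

theorem ConvexOn.strongConvexOn_proxObjective {s : Set E} {f : E → ℝ} (hf : ConvexOn ℝ s f)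
    (y x₀ : E) (c : ℝ) : StrongConvexOn s c⁻¹ (proxObjective f y x₀ c) := by
  refine strongConvexOn_iff_convex.2 <|
    ((hf.add ((innerₛₗ ℝ (y - c⁻¹ • x₀)).convexOn hf.1)).add_const (‖x₀‖ ^ 2 / (2 * c))).congr ?_
  intro u _
  simp only [proxObjective, Pi.add_apply, innerₛₗ_apply_apply, norm_sub_sq_real, inner_sub_left,
    real_inner_smul_left, real_inner_comm u x₀]
  ring

theorem ConvexOn.three_point_of_isMinOn {s : Set E} {f : E → ℝ} (hf : ConvexOn ℝ s f)
    {y x₀ p u : E} {c : ℝ} (hmin : IsMinOn (proxObjective f y x₀ c) s p) (hp : p ∈ s)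
    (hu : u ∈ s) :
    ⟪y, p - u⟫ + f p ≤ f u + (‖x₀ - u‖ ^ 2 - ‖p - u‖ ^ 2 - ‖p - x₀‖ ^ 2) / (2 * c) := by
  have h := (hf.strongConvexOn_proxObjective y x₀ c).add_sq_le_of_isMinOn hmin hp hu
  simp only [proxObjective] at h
  rw [inner_sub_right, norm_sub_rev x₀ u, norm_sub_rev p u]
  have : c⁻¹ / 2 * ‖u - p‖ ^ 2 = ‖u - p‖ ^ 2 / (2 * c) := by ring
  rw [sub_div, sub_div]
  linarith

theorem isMinOn_proxObjective_of_ereal {X : E → EReal} (hproper : ∃ u, X u ≠ ⊤)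
    (hbot : ∀ u, X u ≠ ⊥) {y x₀ p : E} {c : ℝ}
    (hp : ∀ u, ((⟪y, p⟫ + ‖p - x₀‖ ^ 2 / (2 * c) : ℝ) : EReal) + X p ≤
      ((⟪y, u⟫ + ‖u - x₀‖ ^ 2 / (2 * c) : ℝ) : EReal) + X u) :
    X p ≠ ⊤ ∧ IsMinOn (proxObjective (fun u => (X u).toReal) y x₀ c) {u | X u ≠ ⊤} p := by
  have hfin : ∀ ⦃u⦄, X u ≠ ⊤ → X u = ((X u).toReal : EReal) :=
    fun u hu => (EReal.coe_toReal hu (hbot u)).symm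
  have hpfin : X p ≠ ⊤ := by
    obtain ⟨u, hu⟩ := hproper
    intro hptop
    have := hp u
    rw [hptop, EReal.add_top_of_ne_bot (EReal.coe_ne_bot _), hfin hu, ← EReal.coe_add] at this
    exact EReal.coe_ne_top _ (top_le_iff.1 this)
  refine ⟨hpfin, isMinOn_iff.2 fun u hu => ?_⟩
  have := hp u
  rwa [hfin hpfin, hfin hu, ← EReal.coe_add, ← EReal.coe_add, EReal.coe_le_coe_iff] at this

theorem ag_step_combination {y xprev xk xagprev xmd xag u0 z : E} {f : E → ℝ} {α β lam r : ℝ}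
    (hα : 0 ≤ α) (hβ : 0 < β) (hlam : 0 < lam) (hstep : α * lam ≤ β)
    (hmd : xmd = (1 - α) • xagprev + α • xprev) (hu0 : u0 = (1 - α) • xagprev + α • xk)
    (hag : ⟪y, xag - u0⟫ + f xag ≤
      f u0 + (‖xmd - u0‖ ^ 2 - ‖xag - u0‖ ^ 2 - ‖xag - xmd‖ ^ 2) / (2 * β))
    (hx : ⟪y, xk - z⟫ + f xk ≤
      f z + (‖xprev - z‖ ^ 2 - ‖xk - z‖ ^ 2 - ‖xk - xprev‖ ^ 2) / (2 * lam))
    (hcv : f u0 ≤ r + α * f xk) :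
    ⟪y, xag - α • z - (1 - α) • xagprev⟫ + f xag ≤ r + α * f z +
      (α / (2 * lam) * (‖xprev - z‖ ^ 2 - ‖xk - z‖ ^ 2) - 1 / (2 * β) * ‖xag - xmd‖ ^ 2) := by
  have hinner : ⟪y, xag - α • z - (1 - α) • xagprev⟫ = ⟪y, xag - u0⟫ + α * ⟪y, xk - z⟫ := by
    rw [← real_inner_smul_right, ← inner_add_right, hu0]
    congr 1
    module
  have hnorm : ‖xmd - u0‖ ^ 2 = α ^ 2 * ‖xk - xprev‖ ^ 2 := by
    rw [show xmd - u0 = α • (xprev - xk) by rw [hmd, hu0]; module, norm_smul, mul_pow,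
      Real.norm_eq_abs, sq_abs, norm_sub_rev]
  have hcoef : α ^ 2 * ‖xk - xprev‖ ^ 2 / (2 * β) ≤ α * ‖xk - xprev‖ ^ 2 / (2 * lam) := by
    rw [div_le_div_iff₀ (by positivity) (by positivity)]
    have := mul_le_mul_of_nonneg_left hstep (by positivity : 0 ≤ 2 * α * ‖xk - xprev‖ ^ 2)
    nlinarith
  have hdrop : 0 ≤ ‖xag - u0‖ ^ 2 / (2 * β) := by positivity
  rw [hinner]
  rw [hnorm] at hag
  linear_combination hag + mul_le_mul_of_nonneg_left hx hα + hcv + hcoef + hdrop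

end InnerProductSpace

theorem ag_composite_three_point_general {n : ℕ}
    (g : EuclideanSpace ℝ (Fin n) → EuclideanSpace ℝ (Fin n))
    (X : EuclideanSpace ℝ (Fin n) → EReal)
    (hproper : ∃ u, X u ≠ ⊤) (hbot : ∀ u, X u ≠ ⊥)
    (hconv : ∀ u v : EuclideanSpace ℝ (Fin n), ∀ a b : ℝ, 0 ≤ a → 0 ≤ b → a + b = 1 →
      X (a • u + b • v) ≤ (a : EReal) * X u + (b : EReal) * X v)
    (P : EuclideanSpace ℝ (Fin n) → EuclideanSpace ℝ (Fin n) → ℝ → EuclideanSpace ℝ (Fin n))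
    (hP : ∀ x y c, 0 < c → ∀ u,
      ((⟪y, P x y c⟫ + ‖P x y c - x‖ ^ 2 / (2 * c) : ℝ) : EReal) + X (P x y c) ≤
        ((⟪y, u⟫ + ‖u - x‖ ^ 2 / (2 * c) : ℝ) : EReal) + X u)
    (α β lam : ℕ → ℝ)
    (hα : ∀ k ≥ 1, α k ∈ Set.Ioc (0:ℝ) 1)
    (hβ : ∀ k ≥ 1, 0 < β k) (hlam : ∀ k ≥ 1, 0 < lam k)
    (hstep : ∀ k ≥ 1, α k * lam k ≤ β k)
    (x xag xmd : ℕ → EuclideanSpace ℝ (Fin n))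
    (hmd : ∀ k ≥ 1, xmd k = (1 - α k) • xag (k - 1) + α k • x (k - 1))
    (hx : ∀ k ≥ 1, x k = P (x (k - 1)) (g (xmd k)) (lam k))
    (hxag : ∀ k ≥ 1, xag k = P (xmd k) (g (xmd k)) (β k)) :
    ∀ k ≥ 1, ∀ z : EuclideanSpace ℝ (Fin n),
      ((⟪g (xmd k), xag k - α k • z - (1 - α k) • xag (k - 1)⟫ : ℝ) : EReal) + X (xag k) ≤
        ((1 - α k : ℝ) : EReal) * X (xag (k - 1)) + ((α k : ℝ) : EReal) * X z +
          ((α k / (2 * lam k) * (‖x (k - 1) - z‖ ^ 2 - ‖x k - z‖ ^ 2)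
            - 1 / (2 * β k) * ‖xag k - xmd k‖ ^ 2 : ℝ) : EReal) := by
  intro k hk z
  obtain ⟨hα0, hα1⟩ := hα k hk
  have hf := convexOn_toReal_of_ereal hbot hconv
  have hfin : ∀ ⦃u⦄, X u ≠ ⊤ → X u = ((X u).toReal : EReal) :=
    fun u hu => (EReal.coe_toReal hu (hbot u)).symm
  obtain ⟨hxk, hxk_min⟩ := isMinOn_proxObjective_of_ereal (p := x k) hproper hbot
    (by rw [hx k hk]; exact hP _ _ _ (hlam k hk))
  obtain ⟨hxag, hxag_min⟩ := isMinOn_proxObjective_of_ereal (p := xag k) hproper hbot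
    (by rw [hxag k hk]; exact hP _ _ _ (hβ k hk))
  have hne_bot : ∀ {a : ℝ}, 0 ≤ a → ∀ u, (a : EReal) * X u ≠ ⊥ := fun ha u =>
    (EReal.mul_ne_bot _ _).2 ⟨.inl (EReal.coe_ne_bot _), .inr (hbot u), .inl (EReal.coe_ne_top _),
      .inl (EReal.coe_nonneg.2 ha)⟩
  by_cases htop : ((1 - α k : ℝ) : EReal) * X (xag (k - 1)) + ((α k : ℝ) : EReal) * X z = ⊤
  · rw [htop, EReal.top_add_of_ne_bot (EReal.coe_ne_bot _)]
    exact le_top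
  obtain ⟨hR, hαz⟩ := (EReal.add_ne_top_iff_ne_top₂ (hne_bot (sub_nonneg.2 hα1) _)
    (hne_bot hα0.le _)).1 htop
  have hz : X z ≠ ⊤ := fun h => hαz (by rw [h, EReal.coe_mul_top_of_pos hα0])
  obtain ⟨r, hr⟩ : ∃ r : ℝ, ((1 - α k : ℝ) : EReal) * X (xag (k - 1)) = r :=
    ⟨_, (EReal.coe_toReal hR (hne_bot (sub_nonneg.2 hα1) _)).symm⟩
  have hcv := hconv (xag (k - 1)) (x k) (1 - α k) (α k) (sub_nonneg.2 hα1) hα0.le (by ring)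
  rw [hr, hfin hxk, ← EReal.coe_mul, ← EReal.coe_add] at hcv
  rw [hfin hxag, hfin hz, hr, ← EReal.coe_mul, ← EReal.coe_add, ← EReal.coe_add, ← EReal.coe_add,
    EReal.coe_le_coe_iff]
  exact ag_step_combination (f := fun u => (X u).toReal) hα0.le (hβ k hk) (hlam k hk)
    (hstep k hk) (hmd k hk) rfl
    (hf.three_point_of_isMinOn hxag_min hxag (ne_top_of_le_ne_top (EReal.coe_ne_top _) hcv))
    (hf.three_point_of_isMinOn hxk_min hxk hz) (EReal.toReal_le_of_le_coe (hbot _) hcv)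

theorem ag_composite_three_point {n : ℕ}
    (Ψ : EuclideanSpace ℝ (Fin n) → ℝ) (g : EuclideanSpace ℝ (Fin n) → EuclideanSpace ℝ (Fin n))
    (hg : ∀ x, HasGradientAt Ψ (g x) x)
    (X : EuclideanSpace ℝ (Fin n) → EReal)
    (hproper : ∃ u, X u ≠ ⊤) (hbot : ∀ u, X u ≠ ⊥)
    (hlsc : LowerSemicontinuous X)
    (hconv : ∀ u v : EuclideanSpace ℝ (Fin n), ∀ a b : ℝ, 0 ≤ a → 0 ≤ b → a + b = 1 →
      X (a • u + b • v) ≤ (a : EReal) * X u + (b : EReal) * X v)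
    (P : EuclideanSpace ℝ (Fin n) → EuclideanSpace ℝ (Fin n) → ℝ → EuclideanSpace ℝ (Fin n))
    (hP : ∀ x y c, 0 < c → ∀ u,
      ((⟪y, P x y c⟫ + ‖P x y c - x‖ ^ 2 / (2 * c) : ℝ) : EReal) + X (P x y c) ≤
        ((⟪y, u⟫ + ‖u - x‖ ^ 2 / (2 * c) : ℝ) : EReal) + X u)
    (α β lam : ℕ → ℝ)
    (hα : ∀ k ≥ 1, α k ∈ Set.Ioc (0:ℝ) 1)
    (hβ : ∀ k ≥ 1, 0 < β k) (hlam : ∀ k ≥ 1, 0 < lam k)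
    (hstep : ∀ k ≥ 1, α k * lam k ≤ β k)
    (x xag xmd : ℕ → EuclideanSpace ℝ (Fin n))
    (hag0 : xag 0 = x 0)
    (hmd : ∀ k ≥ 1, xmd k = (1 - α k) • xag (k - 1) + α k • x (k - 1))
    (hx : ∀ k ≥ 1, x k = P (x (k - 1)) (g (xmd k)) (lam k))
    (hxag : ∀ k ≥ 1, xag k = P (xmd k) (g (xmd k)) (β k)) :
    ∀ k ≥ 1, ∀ z : EuclideanSpace ℝ (Fin n),
      ((⟪g (xmd k), xag k - α k • z - (1 - α k) • xag (k - 1)⟫ : ℝ) : EReal) + X (xag k) ≤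
        ((1 - α k : ℝ) : EReal) * X (xag (k - 1)) + ((α k : ℝ) : EReal) * X z +
          ((α k / (2 * lam k) * (‖x (k - 1) - z‖ ^ 2 - ‖x k - z‖ ^ 2)
            - 1 / (2 * β k) * ‖xag k - xmd k‖ ^ 2 : ℝ) : EReal) :=
  ag_composite_three_point_general g X hproper hbot hconv P hP α β lam hα hβ hlam hstep x xag xmd
    hmd hx hxag
end
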